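/- arXiv:1910.07698 — 2 statements merged into one kernel-verified Lean document; each statement's English description precedes it below -/
import Mathlib

section
/- Fix a_0 > 0 and let p_k := (a_0+1) · a_0^(k-1) / (2a_0+1)^(k). Then Σ_{k≥0} ((k−1)/(k+a)) · p_{k+1} < 0 for every a > 0. (The key inequality is Σ_{k≥0} (k−1) p_{k+1} = 0, combined with weighting by the decreasing factor 1/(k+a).) -/
open scoped BigOperators

/-- Rising factorial `x^(n) = x(x+1)...(x+n-1)`. -/
noncomputable def risingFac (x : ℝ) (n : ℕ) : ℝ := ∏ i ∈ Finset.range n, (x + i)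

/-- Limiting degree frequencies of the Buckley-Osthus model. -/
noncomputable def BOp (a : ℝ) (k : ℕ) : ℝ :=
  (a + 1) * risingFac a (k - 1) / risingFac (2 * a + 1) k

/-- Tail sum `p_{>m}`. -/
noncomputable def BOtail (a : ℝ) (m : ℕ) : ℝ := ∑' j : ℕ, BOp a (m + 1 + j)

noncomputable def tf (a : ℝ) (k : ℕ) : ℝ := risingFac a k / risingFac (2*a+1) k

lemma risingFac_zero (x : ℝ) : risingFac x 0 = 1 := Finset.prod_range_zero _

lemma risingFac_succ (x : ℝ) (n : ℕ) : risingFac x (n+1) = risingFac x n * (x + n) :=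
  Finset.prod_range_succ _ _

lemma risingFac_pos {x : ℝ} (hx : 0 < x) (n : ℕ) : 0 < risingFac x n :=
  Finset.prod_pos (fun i _ => by positivity)

section
variable {a : ℝ} (ha : 0 < a)
include ha

lemma tf_zero : tf a 0 = 1 := by simp [tf, risingFac_zero]

lemma tf_pos (k : ℕ) : 0 < tf a k :=
  div_pos (risingFac_pos ha k) (risingFac_pos (by linarith) k)

lemma tf_succ (k : ℕ) : tf a (k+1) = tf a k * ((a+k)/(2*a+1+k)) := by
  rw [tf, tf, risingFac_succ, risingFac_succ, div_mul_div_comm]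

lemma BOp_eq (k : ℕ) : BOp a (k+1) = tf a k - tf a (k+1) := by
  have h1 : (0:ℝ) < risingFac (2*a+1) k := risingFac_pos (by linarith) k
  have h2 : (0:ℝ) < 2*a+1+k := by positivity
  rw [tf_succ ha, tf, BOp]
  simp only [Nat.add_sub_cancel, risingFac_succ]
  field_simp
  ring

lemma BOp_pos (k : ℕ) : 0 < BOp a (k+1) := by
  rw [BOp]
  simp only [Nat.add_sub_cancel]
  exact div_pos (mul_pos (by linarith) (risingFac_pos ha k)) (risingFac_pos (by linarith) (k+1))

lemma tf_le (k : ℕ) : tf a k ≤ a / (a + k) := by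
  induction k with
  | zero => simp [tf_zero ha, div_self ha.ne']
  | succ n ih =>
      rw [tf_succ ha]
      have h1 : (0:ℝ) < a + n := by positivity
      have h2 : (0:ℝ) < 2*a+1+n := by positivity
      have h3 : (0:ℝ) < a + (n+1) := by positivity
      have step : tf a n * ((a+n)/(2*a+1+n)) ≤ (a/(a+n)) * ((a+n)/(2*a+1+n)) := by
        apply mul_le_mul_of_nonneg_right ih (by positivity)
      refine step.trans ?_
      push_cast
      rw [div_mul_div_comm, div_le_div_iff₀ (by positivity) (by positivity)]
      nlinarith [ha.le, (Nat.cast_nonneg n : (0:ℝ) ≤ n), mul_pos ha h1]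

lemma tf_tendsto : Filter.Tendsto (fun k : ℕ => tf a k) Filter.atTop (nhds 0) := by
  have hlim : Filter.Tendsto (fun k : ℕ => a / (a + k)) Filter.atTop (nhds 0) := by
    apply Filter.Tendsto.div_atTop (tendsto_const_nhds)
    exact Filter.tendsto_atTop_add_const_left _ a tendsto_natCast_atTop_atTop
  exact squeeze_zero (fun k => (tf_pos ha k).le) (fun k => tf_le ha k) hlim

lemma sum_q (N : ℕ) : ∑ k ∈ Finset.range N, BOp a (k+1) = 1 - tf a N := by
  have : ∑ k ∈ Finset.range N, BOp a (k+1)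
      = ∑ k ∈ Finset.range N, (tf a k - tf a (k+1)) :=
    Finset.sum_congr rfl (fun k _ => BOp_eq ha k)
  rw [this, Finset.sum_range_sub' (tf a) N, tf_zero ha]

lemma q_summable : Summable (fun k : ℕ => BOp a (k+1)) := by
  apply summable_of_sum_range_le (c := 1) (fun k => (BOp_pos ha k).le)
  intro n
  rw [sum_q ha]
  linarith [tf_pos ha n]

lemma q_tsum : ∑' k : ℕ, BOp a (k+1) = 1 := by
  have h1 := (q_summable ha).hasSum.tendsto_sum_nat
  have h2 : Filter.Tendsto (fun N => ∑ k ∈ Finset.range N, BOp a (k+1))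
      Filter.atTop (nhds 1) := by
    simp only [sum_q ha]
    have := (tf_tendsto ha).const_sub 1
    simpa using this
  exact tendsto_nhds_unique h1 h2

/-- the second telescope: `u k = (2a+k) * tf a k / a`, with `u k - u (k+1) = tf a k`. -/
lemma u_telescope (k : ℕ) :
    tf a (k+1) = (2*a+(k+1:ℕ)) * tf a (k+1) / a - (2*a+((k+1)+1:ℕ)) * tf a ((k+1)+1) / a := by
  have h2 : (0:ℝ) < 2*a+1+(k+1) := by positivity
  rw [tf_succ ha ((k+1))]
  push_cast
  field_simp
  ring

lemma sum_t_le (N : ℕ) : ∑ k ∈ Finset.range N, tf a (k+1) ≤ 1 := by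
  have key : ∑ k ∈ Finset.range N, tf a (k+1)
      = (2*a+(1:ℕ)) * tf a 1 / a - (2*a+(N+1:ℕ)) * tf a (N+1) / a := by
    have : ∀ k ∈ Finset.range N, tf a (k+1)
        = (fun j : ℕ => (2*a+(j+1:ℕ)) * tf a (j+1) / a) k
          - (fun j : ℕ => (2*a+(j+1:ℕ)) * tf a (j+1) / a) (k+1) := by
      intro k _
      exact u_telescope ha k
    rw [Finset.sum_congr rfl this, Finset.sum_range_sub' _ N]
  have ht1 : tf a 1 = a / (2*a+1) := by
    rw [tf, risingFac_succ, risingFac_succ, risingFac_zero, risingFac_zero]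
    norm_num
  have hu1 : (2*a+(1:ℕ)) * tf a 1 / a = 1 := by
    rw [ht1]
    push_cast
    field_simp
  have hpos : 0 ≤ (2*a+(N+1:ℕ)) * tf a (N+1) / a := by
    have := (tf_pos ha (N+1)).le
    positivity
  rw [key, hu1]
  linarith

lemma sum_kq (N : ℕ) : ∑ k ∈ Finset.range N, (k:ℝ) * BOp a (k+1)
    = (∑ k ∈ Finset.range N, tf a k) - 1 - ((N:ℝ) - 1) * tf a N := by
  induction N with
  | zero => simp [tf_zero ha, div_self ha.ne']
  | succ n ih =>
      rw [Finset.sum_range_succ, ih, BOp_eq ha, Finset.sum_range_succ]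
      push_cast
      ring

lemma sum_kq_le (N : ℕ) : ∑ k ∈ Finset.range N, (k:ℝ) * BOp a (k+1) ≤ 1 := by
  rw [sum_kq ha]
  cases N with
  | zero => simp [tf_zero ha]
  | succ n =>
      have h1 : ∑ k ∈ Finset.range (n+1), tf a k = 1 + ∑ k ∈ Finset.range n, tf a (k+1) := by
        rw [Finset.sum_range_succ' (tf a), tf_zero ha]
        ring
      have h2 := sum_t_le ha n
      have h3 : 0 ≤ ((n+1:ℕ):ℝ) - 1 := by push_cast; linarith [Nat.cast_nonneg (α := ℝ) n]
      have h4 := (tf_pos ha (n+1)).le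
      nlinarith

lemma kq_summable : Summable (fun k : ℕ => (k:ℝ) * BOp a (k+1)) := by
  apply summable_of_sum_range_le (c := 1)
    (fun k => mul_nonneg (Nat.cast_nonneg k) (BOp_pos ha k).le)
  exact sum_kq_le ha

lemma kq_tsum_le : ∑' k : ℕ, (k:ℝ) * BOp a (k+1) ≤ 1 :=
  Summable.tsum_le_of_sum_range_le (kq_summable ha) (sum_kq_le ha)

end

theorem bo_key_negative (a₀ : ℝ) (ha₀ : 0 < a₀) (a : ℝ) (ha : 0 < a) :
    ∑' k : ℕ, (((k : ℝ) - 1) / ((k : ℝ) + a)) * BOp a₀ (k + 1) < 0 := by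
  set q : ℕ → ℝ := fun k => BOp a₀ (k+1) with hq
  have hqpos : ∀ k, 0 < q k := fun k => BOp_pos ha₀ k
  have hqs : Summable q := q_summable ha₀
  have hkqs : Summable (fun k : ℕ => (k:ℝ) * q k) := kq_summable ha₀
  -- summability of f
  set f : ℕ → ℝ := fun k => (((k : ℝ) - 1) / ((k : ℝ) + a)) * q k with hf
  set g : ℕ → ℝ := fun k => (((k : ℝ) - 1) / (1 + a)) * q k with hg
  have hfs : Summable f := by
    apply Summable.of_norm_bounded (g := fun k : ℕ => (1/a) * ((k:ℝ) * q k + q k))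
      (((hkqs.add hqs).mul_left (1/a)))
    intro k
    have hka : (0:ℝ) < (k:ℝ) + a := by positivity
    have : ‖f k‖ = |((k : ℝ) - 1) / ((k : ℝ) + a)| * q k := by
      rw [hf]; rw [Real.norm_eq_abs, abs_mul, abs_of_pos (hqpos k)]
    rw [this]
    have h1 : |((k : ℝ) - 1) / ((k : ℝ) + a)| ≤ (1/a) * ((k:ℝ) + 1) := by
      rw [abs_div, abs_of_pos hka, div_le_iff₀ hka]
      have h2 : |(k:ℝ) - 1| ≤ (k:ℝ) + 1 := by
        rw [abs_le]; constructor <;> [linarith [Nat.cast_nonneg (α := ℝ) k]; linarith]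
      have h3 : (k:ℝ) + 1 ≤ ((k:ℝ)+1) * ((k:ℝ)+a) / a := by
        rw [le_div_iff₀ ha]
        nlinarith [Nat.cast_nonneg (α := ℝ) k]
      calc |(k:ℝ) - 1| ≤ (k:ℝ) + 1 := h2
        _ ≤ ((k:ℝ)+1) * ((k:ℝ)+a) / a := h3
        _ = 1/a * ((k:ℝ)+1) * ((k:ℝ)+a) := by ring
    calc |((k : ℝ) - 1) / ((k : ℝ) + a)| * q k
        ≤ (1/a) * ((k:ℝ) + 1) * q k :=
          mul_le_mul_of_nonneg_right h1 (hqpos k).le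
      _ = (1/a) * ((k:ℝ) * q k + q k) := by ring
  have hgs : Summable g := by
    have : g = fun k : ℕ => (1/(1+a)) * ((k:ℝ) * q k - q k) := by
      funext k; rw [hg]; ring
    rw [this]
    exact ((hkqs.sub hqs).mul_left _)
  -- termwise comparison, strict at 0
  have hlt : f 0 < g 0 := by
    simp only [hf, hg, Nat.cast_zero]
    have h1 : (0:ℝ) - 1 = -1 := by ring
    have : ((0:ℝ) - 1) / (0 + a) < ((0:ℝ) - 1) / (1 + a) := by
      rw [div_lt_div_iff₀ (by linarith) (by linarith)]
      nlinarith
    exact mul_lt_mul_of_pos_right this (hqpos 0)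
  have hle : ∀ k, f k ≤ g k := by
    intro k
    apply mul_le_mul_of_nonneg_right _ (hqpos k).le
    rcases Nat.eq_zero_or_pos k with h0 | h0
    · subst h0
      simp only [Nat.cast_zero]
      rw [div_le_div_iff₀ (by linarith) (by linarith)]
      nlinarith
    · have hk1 : (1:ℝ) ≤ (k:ℝ) := by exact_mod_cast h0
      rw [div_le_div_iff₀ (by linarith) (by linarith)]
      nlinarith
  have hsum : ∑' k, f k < ∑' k, g k := Summable.tsum_lt_tsum hle hlt hfs hgs
  have hg0 : ∑' k, g k ≤ 0 := by
    have heq : ∀ k : ℕ, g k = (1/(1+a)) * ((k:ℝ) * q k - q k) := by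
      intro k; rw [hg]; ring
    calc ∑' k, g k = ∑' k : ℕ, (1/(1+a)) * ((k:ℝ) * q k - q k) := by
          exact tsum_congr heq
      _ = (1/(1+a)) * ∑' k : ℕ, ((k:ℝ) * q k - q k) := tsum_mul_left
      _ = (1/(1+a)) * ((∑' k : ℕ, (k:ℝ) * q k) - ∑' k, q k) := by
          rw [Summable.tsum_sub hkqs hqs]
      _ ≤ 0 := by
          have h1 := kq_tsum_le ha₀
          have h1' : (∑' k : ℕ, (k:ℝ) * q k) ≤ 1 := h1
          have h2 : ∑' k, q k = 1 := q_tsum ha₀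
          rw [h2]
          have h5 : (∑' k : ℕ, (k:ℝ) * q k) - 1 ≤ 0 := by linarith
          have hpos : (0:ℝ) < 1/(1+a) := by positivity
          nlinarith [h5, hpos]
  calc ∑' k : ℕ, (((k : ℝ) - 1) / ((k : ℝ) + a)) * BOp a₀ (k + 1) = ∑' k, f k := rfl
    _ < ∑' k, g k := hsum
    _ ≤ 0 := hg0
end

section
/- Fix a_0 > 0 and define the limiting log-likelihood ℓ_∞(a) := Σ_{k≥0} p_{>k+1} log(a+k) − log(a+1) for a > 0, where p_k := (a_0+1) · a_0^(k-1)/(2a_0+1)^(k) and p_{>m} := Σ_{j>m} p_j. Then ℓ_∞ is differentiable on (0,∞), its derivative is positive on (0, a_0) and negative on (a_0, ∞), and ℓ_∞ attains its unique maximum on (0,∞) at a = a_0. -/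
open scoped BigOperators

/-- The limiting scaled log-likelihood of the Buckley-Osthus model. -/
noncomputable def ellInf (a₀ a : ℝ) : ℝ :=
  (∑' k : ℕ, BOtail a₀ (k + 1) * Real.log (a + k)) - Real.log (a + 1)

namespace BOaux

open Real Filter Finset

/-- Closed form of the tail: `r a m = a^(m)/(2a+1)^(m)`. -/
noncomputable def rr (a : ℝ) (m : ℕ) : ℝ := risingFac a m / risingFac (2 * a + 1) m

lemma risingFac_pos {x : ℝ} (hx : 0 < x) (n : ℕ) : 0 < risingFac x n :=
  Finset.prod_pos fun i _ => by positivity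

lemma risingFac_succ (x : ℝ) (n : ℕ) : risingFac x (n + 1) = risingFac x n * (x + n) :=
  Finset.prod_range_succ _ _

variable {a : ℝ}

lemma rr_pos (ha : 0 < a) (m : ℕ) : 0 < rr a m :=
  div_pos (risingFac_pos ha m) (risingFac_pos (by linarith) m)

lemma rr_zero : rr a 0 = 1 := by simp [rr, risingFac]

lemma rr_succ (ha : 0 < a) (m : ℕ) :
    rr a (m + 1) = rr a m * ((a + m) / (2 * a + 1 + m)) := by
  have h1 : risingFac (2 * a + 1) m ≠ 0 := (risingFac_pos (by linarith) m).ne'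
  have h2 : (2 * a + 1 + (m : ℝ)) ≠ 0 := by positivity
  rw [rr, rr, risingFac_succ, risingFac_succ]
  field_simp

lemma rr_sub (ha : 0 < a) (m : ℕ) :
    rr a m - rr a (m + 1) = rr a m * ((a + 1) / (2 * a + 1 + m)) := by
  have h2 : (2 * a + 1 + (m : ℝ)) ≠ 0 := by positivity
  rw [rr_succ ha]
  field_simp
  ring

lemma rr_anti (ha : 0 < a) (m : ℕ) : rr a (m + 1) ≤ rr a m := by
  rw [rr_succ ha]
  have h1 : (a + (m:ℝ)) / (2 * a + 1 + m) ≤ 1 := by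
    apply div_le_one_of_le₀ _ (by positivity)
    linarith [Nat.cast_nonneg (α := ℝ) m]
  exact mul_le_of_le_one_right (rr_pos ha m).le h1

lemma BOp_succ (ha : 0 < a) (m : ℕ) : BOp a (m + 1) = rr a m - rr a (m + 1) := by
  have h1 : risingFac (2 * a + 1) m ≠ 0 := (risingFac_pos (by linarith) m).ne'
  have h2 : (2 * a + 1 + (m : ℝ)) ≠ 0 := by positivity
  rw [rr_sub ha, BOp, Nat.add_sub_cancel, risingFac_succ, rr]
  field_simp

/-- telescoping series of a nonneg-difference sequence tending to zero -/
lemma hasSum_telescope {f : ℕ → ℝ} (hanti : ∀ n, f (n + 1) ≤ f n)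
    (h0 : Tendsto f atTop (nhds 0)) :
    HasSum (fun n => f n - f (n + 1)) (f 0) := by
  rw [hasSum_iff_tendsto_nat_of_nonneg (fun i => sub_nonneg.2 (hanti i))]
  have h : ∀ n, ∑ i ∈ Finset.range n, (f i - f (i + 1)) = f 0 - f n :=
    fun n => Finset.sum_range_sub' f n
  simp only [h]
  simpa using tendsto_const_nhds.sub h0

lemma teleprod {c : ℝ} (hc : 0 < c) (m : ℕ) :
    (∏ i ∈ Finset.range m, ((c + i) / (c + 1 + i))) = c / (c + m) := by
  induction m with
  | zero => simp [div_self hc.ne']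
  | succ n ih =>
      rw [Finset.prod_range_succ, ih]
      have h1 : c + (n : ℝ) ≠ 0 := by positivity
      have h2 : c + 1 + (n : ℝ) ≠ 0 := by positivity
      rw [div_mul_div_comm, show c * (c + (n:ℝ)) = (c + (n:ℝ)) * c by ring,
        show (c + (n:ℝ)) * (c + 1 + (n:ℝ)) = (c + (n:ℝ)) * (c + 1 + (n:ℝ)) from rfl,
        mul_div_mul_left _ _ h1]
      congr 1
      push_cast
      ring

lemma rr_eq_prod (m : ℕ) :
    rr a m = ∏ i ∈ Finset.range m, ((a + i) / (2 * a + 1 + i)) := by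
  rw [rr, risingFac, risingFac, ← Finset.prod_div_distrib]

/-- Bernoulli-type bound: `y/(y+aa) ≤ (y/(y+1))^δ` for `0 < δ ≤ 1`, `δ ≤ aa`. -/
lemma aux_bern {y δ aa : ℝ} (hy : 0 < y) (hδ0 : 0 < δ) (hδ1 : δ ≤ 1) (hδa : δ ≤ aa) :
    y / (y + aa) ≤ (y / (y + 1)) ^ δ := by
  have hb : ((y + 1) / y) ^ δ ≤ (y + δ) / y := by
    have h := rpow_one_add_le_one_add_mul_self (s := 1 / y)
      (by
        have h0 : (0:ℝ) ≤ 1 / y := by positivity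
        linarith) hδ0.le hδ1
    have e1 : (y + 1) / y = 1 + 1 / y := by
      rw [add_div, div_self hy.ne']
    have e2 : (y + δ) / y = 1 + δ * (1 / y) := by
      rw [add_div, div_self hy.ne', mul_one_div]
    rw [e1, e2]
    exact h
  have hinv : (y / (y + 1)) ^ δ = (((y + 1) / y) ^ δ)⁻¹ := by
    rw [← Real.inv_rpow (by positivity)]
    congr 1
    rw [inv_div]
  rw [hinv]
  have hp : (0:ℝ) < ((y + 1) / y) ^ δ := Real.rpow_pos_of_pos (by positivity) _
  have h4 : y / (y + aa) ≤ y / (y + δ) :=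
    div_le_div_of_nonneg_left hy.le (by linarith) (by linarith)
  have h5 : y / (y + δ) = ((y + δ) / y)⁻¹ := by rw [inv_div]
  calc y / (y + aa) ≤ y / (y + δ) := h4
    _ = ((y + δ) / y)⁻¹ := h5
    _ ≤ (((y + 1) / y) ^ δ)⁻¹ := inv_anti₀ hp hb

/-- the key polynomial-decay upper bound, with `δ = min a 1`. -/
lemma rr_le (ha : 0 < a) (m : ℕ) :
    rr a m ≤ (a / (a + m)) * ((a + 1) / (a + 1 + m)) ^ (min a 1 : ℝ) := by
  have hδ0 : 0 < min a 1 := lt_min ha one_pos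
  have hδ1 : min a 1 ≤ 1 := min_le_right _ _
  have hδa : min a 1 ≤ a := min_le_left _ _
  rw [rr_eq_prod]
  have key : ∀ i : ℕ, (a + i) / (2 * a + 1 + i)
      ≤ ((a + i) / (a + 1 + i)) * (((a + 1 + i) / (a + 2 + i)) ^ (min a 1 : ℝ)) := by
    intro i
    have hy0 : (0:ℝ) < a + 1 + i := by positivity
    have h2 := aux_bern (aa := a) hy0 hδ0 hδ1 hδa
    have e3 : (a + (i:ℝ)) / (2 * a + 1 + i)
        = ((a + i) / (a + 1 + i)) * ((a + 1 + i) / ((a + 1 + i) + a)) := by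
      have h1 : (a + 1 + (i:ℝ)) ≠ 0 := hy0.ne'
      rw [div_mul_div_comm, show (a + (i:ℝ)) * (a + 1 + i) = (a + 1 + i) * (a + i) by ring,
        mul_div_mul_left _ _ h1]
      congr 1
      ring
    have e4 : (a + 2 + (i:ℝ)) = (a + 1 + i) + 1 := by ring
    rw [e3, e4]
    exact mul_le_mul_of_nonneg_left h2 (by positivity)
  calc (∏ i ∈ Finset.range m, ((a + i) / (2 * a + 1 + i)))
      ≤ ∏ i ∈ Finset.range m,
          (((a + i) / (a + 1 + i)) * (((a + 1 + i) / (a + 2 + i)) ^ (min a 1 : ℝ))) := by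
        apply Finset.prod_le_prod
        · intro i _; positivity
        · intro i _; exact key i
    _ = (∏ i ∈ Finset.range m, ((a + i) / (a + 1 + i)))
        * ∏ i ∈ Finset.range m, (((a + 1 + i) / (a + 2 + i)) ^ (min a 1 : ℝ)) :=
        Finset.prod_mul_distrib
    _ = (a / (a + m)) * ((a + 1) / (a + 1 + m)) ^ (min a 1 : ℝ) := by
        rw [teleprod ha]
        congr 1
        rw [Real.finset_prod_rpow _ _ (fun i _ => by positivity)]
        congr 1
        have h : ∀ i : ℕ, (a + 1 + (i:ℝ)) / (a + 2 + i) = ((a+1) + i) / ((a+1) + 1 + i) := by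
          intro i; congr 1; ring
        rw [Finset.prod_congr rfl (fun i _ => h i), teleprod (by linarith : (0:ℝ) < a + 1)]

lemma rr_tendsto (ha : 0 < a) : Tendsto (rr a) atTop (nhds 0) := by
  apply squeeze_zero (fun m => (rr_pos ha m).le)
    (fun m => le_trans (by
      calc rr a m ≤ (a / (a + m)) * ((a + 1) / (a + 1 + m)) ^ (min a 1 : ℝ) := rr_le ha m
        _ ≤ (a / (a + m)) * 1 := by
            apply mul_le_mul_of_nonneg_left _ (by positivity)
            apply Real.rpow_le_one (by positivity)
            · apply div_le_one_of_le₀ (by linarith) (by positivity)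
            · exact (lt_min ha one_pos).le
        _ = a / (a + m) := mul_one _) (le_refl _))
  have h1 : Tendsto (fun m : ℕ => a + (m:ℝ)) atTop atTop :=
    tendsto_atTop_add_const_left _ _ tendsto_natCast_atTop_atTop
  exact Tendsto.div_atTop tendsto_const_nhds h1

/-- `s m = (2a+m)/a * r m`, the second telescoping sequence. -/
noncomputable def ss (a : ℝ) (m : ℕ) : ℝ := (2 * a + m) / a * rr a m

lemma ss_sub (ha : 0 < a) (m : ℕ) : ss a m - ss a (m + 1) = rr a m := by
  have h2 : (2 * a + 1 + (m : ℝ)) ≠ 0 := by positivity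
  rw [ss, ss, rr_succ ha]
  push_cast
  field_simp
  ring

lemma ss_tendsto (ha : 0 < a) : Tendsto (ss a) atTop (nhds 0) := by
  have hb : ∀ m : ℕ, ss a m ≤ 2 * ((a + 1) / (a + 1 + m)) ^ (min a 1 : ℝ) := by
    intro m
    have h1 : ss a m ≤ (2 * a + m) / a * ((a / (a + m)) * ((a + 1) / (a + 1 + m)) ^ (min a 1 : ℝ)) := by
      apply mul_le_mul_of_nonneg_left (rr_le ha m) (by positivity)
    have h2 : (2 * a + (m:ℝ)) / a * (a / (a + m)) ≤ 2 := by
      rw [div_mul_div_comm]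
      rw [div_le_iff₀ (by positivity)]
      nlinarith [Nat.cast_nonneg (α := ℝ) m]
    calc ss a m ≤ (2 * a + m) / a * ((a / (a + m)) * ((a + 1) / (a + 1 + m)) ^ (min a 1 : ℝ)) := h1
      _ = ((2 * a + (m:ℝ)) / a * (a / (a + m))) * ((a + 1) / (a + 1 + m)) ^ (min a 1 : ℝ) := by ring
      _ ≤ 2 * ((a + 1) / (a + 1 + m)) ^ (min a 1 : ℝ) := by
          apply mul_le_mul_of_nonneg_right h2 (by positivity)
  have hlo : ∀ m : ℕ, 0 ≤ ss a m := fun m => by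
    have h1 := (rr_pos ha m).le
    have h2 : (0:ℝ) ≤ (2 * a + (m:ℝ)) / a := by positivity
    exact mul_nonneg h2 h1
  apply squeeze_zero hlo hb
  have hbase : Tendsto (fun m : ℕ => (a + 1) / (a + 1 + m)) atTop (nhds 0) := by
    have h1 : Tendsto (fun m : ℕ => a + 1 + (m:ℝ)) atTop atTop :=
      tendsto_atTop_add_const_left _ _ tendsto_natCast_atTop_atTop
    exact Tendsto.div_atTop tendsto_const_nhds h1
  have := (hbase.rpow (tendsto_const_nhds (x := (min a 1 : ℝ)))
    (Or.inr (lt_min ha one_pos)))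
  rw [Real.zero_rpow (lt_min ha one_pos).ne'] at this
  simpa using this.const_mul 2

lemma hasSum_rr (ha : 0 < a) : HasSum (rr a) 2 := by
  have h := hasSum_telescope (f := ss a)
    (fun n => by have := ss_sub ha n; have := rr_pos ha n; linarith)
    (ss_tendsto ha)
  have h0 : ss a 0 = 2 := by
    rw [ss, rr_zero]
    push_cast
    field_simp
    ring
  rw [h0] at h
  exact h.congr_fun fun n => (ss_sub ha n).symm

lemma hasSum_rr_one (ha : 0 < a) : HasSum (fun m => rr a (m + 1)) 1 := by
  have h := (hasSum_rr ha)
  rw [← hasSum_nat_add_iff' 1] at h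
  simp only [Finset.sum_range_one, rr_zero] at h
  norm_num at h
  exact h

lemma hasSum_BOtail (ha : 0 < a) (m : ℕ) : HasSum (fun j => BOp a (m + 1 + j)) (rr a m) := by
  have h := hasSum_telescope (f := fun j => rr a (m + j))
    (fun n => by
      have := rr_anti ha (m + n)
      simpa [← add_assoc] using this)
    (by
      have h := (rr_tendsto ha).comp (tendsto_add_atTop_nat m)
      simpa [Function.comp_def, add_comm] using h)
  simp only [add_zero] at h
  apply h.congr_fun
  intro j
  have e : m + 1 + j = (m + j) + 1 := by omega
  rw [e, BOp_succ ha]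
  rfl

lemma BOtail_eq (ha : 0 < a) (m : ℕ) : BOtail a m = rr a m :=
  (hasSum_BOtail ha m).tsum_eq

end BOaux

namespace BOaux

open Real Filter Finset

variable {a x : ℝ}

/-- summability of `r_{k+1} log(x+k)` -/
lemma summable_rlog (ha : 0 < a) (hx : 0 < x) :
    Summable (fun k : ℕ => rr a (k + 1) * Real.log (x + k)) := by
  set δ : ℝ := min a 1 with hδ
  have hδ0 : 0 < δ := lt_min ha one_pos
  rw [← summable_nat_add_iff 1]
  have hsum : Summable (fun k : ℕ => (a * (a + 1) ^ δ * (2 / δ * (x + 1) ^ (δ/2)))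
      * ((k+1:ℝ) ^ (-(1 + δ/2)))) := by
    apply Summable.mul_left
    have h := Real.summable_nat_rpow (p := -(1 + δ/2)).2 (by linarith)
    have h2 := (summable_nat_add_iff 1).2 h
    apply h2.congr
    intro n
    push_cast
    rfl
  apply Summable.of_nonneg_of_le _ _ hsum
  · intro k
    have h1 : (1:ℝ) ≤ x + (k + 1 : ℕ) := by
      have : (0:ℝ) ≤ (k:ℝ) := Nat.cast_nonneg k
      push_cast; linarith
    have := rr_pos ha (k + 1 + 1)
    have hl : 0 ≤ Real.log (x + (k+1:ℕ)) := Real.log_nonneg h1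
    positivity
  · intro k
    have hk1 : (1:ℝ) ≤ (k+1:ℝ) := by linarith [Nat.cast_nonneg (α := ℝ) k]
    have hk0 : (0:ℝ) < (k+1:ℝ) := by linarith
    -- bound on rr
    have hrr : rr a (k + 1 + 1) ≤ a * (a + 1) ^ δ * ((k+1:ℝ)) ^ (-(1+δ)) := by
      calc rr a (k + 1 + 1) ≤ rr a (k + 1) := rr_anti ha (k+1)
        _ ≤ (a / (a + (k+1:ℕ))) * ((a + 1) / (a + 1 + (k+1:ℕ))) ^ δ := rr_le ha (k+1)
        _ ≤ (a / (k+1:ℝ)) * ((a + 1) / (k+1:ℝ)) ^ δ := by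
            apply mul_le_mul
            · apply div_le_div_of_nonneg_left ha.le hk0 (by push_cast; linarith)
            · apply Real.rpow_le_rpow (by positivity) _ hδ0.le
              apply div_le_div_of_nonneg_left (by linarith) hk0 (by push_cast; linarith)
            · positivity
            · positivity
        _ = a * (a + 1) ^ δ * ((k+1:ℝ)) ^ (-(1+δ)) := by
            rw [Real.div_rpow (by linarith) hk0.le]
            rw [Real.rpow_neg hk0.le, Real.rpow_add hk0, Real.rpow_one]
            field_simp
    -- bound on log
    have hxk : (1:ℝ) ≤ x + (k+1:ℕ) := by push_cast; linarith
    have hxk0 : (0:ℝ) < x + (k+1:ℕ) := by linarith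
    have hlog : Real.log (x + (k+1:ℕ)) ≤ 2 / δ * (x + 1) ^ (δ/2) * ((k+1:ℝ)) ^ (δ/2) := by
      have h1 : Real.log (x + (k+1:ℕ)) = 2/δ * Real.log ((x + (k+1:ℕ)) ^ (δ/2)) := by
        rw [Real.log_rpow hxk0]
        field_simp
      rw [h1]
      have h2 : Real.log ((x + (k+1:ℕ)) ^ (δ/2)) ≤ (x + (k+1:ℕ)) ^ (δ/2) := by
        have := Real.log_le_sub_one_of_pos (Real.rpow_pos_of_pos hxk0 (δ/2))
        have h3 : (0:ℝ) < (x + (k+1:ℕ)) ^ (δ/2) := Real.rpow_pos_of_pos hxk0 _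
        linarith
      have h4 : (x + ((k+1:ℕ):ℝ)) ^ (δ/2) ≤ ((x+1) * (k+1:ℝ)) ^ (δ/2) := by
        apply Real.rpow_le_rpow hxk0.le _ (by positivity)
        push_cast
        nlinarith [Nat.cast_nonneg (α := ℝ) k, hx]
      rw [Real.mul_rpow (by linarith) hk0.le] at h4
      have h5 : (0:ℝ) < 2/δ := by positivity
      calc 2/δ * Real.log ((x + (k+1:ℕ)) ^ (δ/2))
          ≤ 2/δ * ((x+1) ^ (δ/2) * ((k+1:ℝ)) ^ (δ/2)) := by
            apply mul_le_mul_of_nonneg_left (le_trans h2 h4) h5.le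
        _ = 2 / δ * (x + 1) ^ (δ/2) * ((k+1:ℝ)) ^ (δ/2) := by ring
    have hlog0 : 0 ≤ Real.log (x + (k+1:ℕ)) := Real.log_nonneg hxk
    have hrr0 : 0 ≤ rr a (k + 1 + 1) := (rr_pos ha _).le
    calc rr a (k + 1 + 1) * Real.log (x + (k+1:ℕ))
        ≤ (a * (a + 1) ^ δ * ((k+1:ℝ)) ^ (-(1+δ))) * (2 / δ * (x + 1) ^ (δ/2) * ((k+1:ℝ)) ^ (δ/2)) := by
          apply mul_le_mul hrr hlog hlog0 (by positivity)
      _ = (a * (a + 1) ^ δ * (2 / δ * (x + 1) ^ (δ/2))) * ((k+1:ℝ) ^ (-(1 + δ/2))) := by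
          have hpow : ((k:ℝ)+1) ^ (-(1+δ)) * ((k:ℝ)+1) ^ (δ/2) = ((k:ℝ)+1) ^ (-(1 + δ/2)) := by
            rw [← Real.rpow_add hk0]
            congr 1
            ring
          rw [← hpow]
          ring

lemma summable_rr (ha : 0 < a) : Summable (fun m : ℕ => rr a (m + 1)) :=
  (hasSum_rr_one ha).summable

/-- `HasSum r_{k+1}/(a+k) = 1/(a+1)` (the critical-point identity). -/
lemma hasSum_crit (ha : 0 < a) :
    HasSum (fun k : ℕ => rr a (k + 1) / (a + k)) (1 / (a + 1)) := by
  have h := ((hasSum_telescope (f := rr a)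
      (fun n => rr_anti ha n) (rr_tendsto ha)).div_const (a + 1))
  rw [rr_zero] at h
  apply h.congr_fun
  intro k
  have h1 : (2 * a + 1 + (k : ℝ)) ≠ 0 := by positivity
  have h2 : (a + (k : ℝ)) ≠ 0 := by positivity
  have h3 : (a + 1 : ℝ) ≠ 0 := by linarith
  rw [rr_sub ha, rr_succ ha]
  field_simp

/-- summability of the Abel remainder -/
lemma summable_abel (ha : 0 < a) (hx : 0 < x) :
    Summable (fun k : ℕ => rr a (k + 1) * (1 / ((x + k) * (x + k + 1)))) := by
  apply Summable.of_nonneg_of_le _ _ ((summable_rr ha).mul_right (1/(x*x)))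
  · intro k
    have h1 := (rr_pos ha (k+1)).le
    have h2 : (0:ℝ) < x + k := by positivity
    positivity
  · intro k
    have h2 : (0:ℝ) < x + k := by positivity
    have h3 : x * x ≤ (x + k) * (x + k + 1) := by
      nlinarith [Nat.cast_nonneg (α := ℝ) k]
    apply mul_le_mul_of_nonneg_left _ (rr_pos ha (k+1)).le
    apply div_le_div_of_nonneg_left one_pos.le (by positivity) h3

/-- Abel summation: `∑ (r_k - r_{k+1})/(x+k) = 1/x - ∑ r_{k+1}/((x+k)(x+k+1))`. -/
lemma hasSum_abel (ha : 0 < a) (hx : 0 < x) :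
    HasSum (fun k : ℕ => (rr a k - rr a (k + 1)) / (x + k))
      (1 / x - ∑' k : ℕ, rr a (k + 1) * (1 / ((x + k) * (x + k + 1)))) := by
  have hA : HasSum (fun k : ℕ => rr a k / (x + k) - rr a (k+1) / (x + (k+1):ℝ)) (1 / x) := by
    have h := hasSum_telescope (f := fun k : ℕ => rr a k / (x + k))
      (fun n => by
        apply div_le_div₀ (rr_pos ha n).le (rr_anti ha n) (by positivity)
        push_cast; linarith)
      (by
        apply squeeze_zero (fun m => div_nonneg (rr_pos ha m).le (by positivity))
          (fun m => by
            apply div_le_div₀ (rr_pos ha m).le (le_refl _) hx _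
            · have : (0:ℝ) ≤ (m:ℝ) := Nat.cast_nonneg m
              linarith)
          (by simpa using (rr_tendsto ha).div_const x))
    simpa [rr_zero] using h
  have hU := (summable_abel ha hx).hasSum
  have h := hA.sub hU
  apply h.congr_fun
  intro k
  have h2 : (x + (k:ℝ)) ≠ 0 := by positivity
  have h3 : (x + (k:ℝ) + 1) ≠ 0 := by positivity
  field_simp
  ring

/-- The strict inequality `∑ (r_k - r_{k+1})/(x+k) > 1/(x+1)`. -/
lemma sum_gt (ha : 0 < a) (hx : 0 < x) :
    1 / (x + 1) < ∑' k : ℕ, (rr a k - rr a (k + 1)) / (x + k) := by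
  rw [(hasSum_abel ha hx).tsum_eq]
  have hU : (∑' k : ℕ, rr a (k + 1) * (1 / ((x + k) * (x + k + 1))))
      < ∑' k : ℕ, rr a (k + 1) * (1 / (x * (x + 1))) := by
    apply Summable.tsum_lt_tsum_of_nonneg (i := 1)
    · intro b
      have h1 := (rr_pos ha (b+1)).le
      have h2 : (0:ℝ) < x + b := by positivity
      positivity
    · intro b
      apply mul_le_mul_of_nonneg_left _ (rr_pos ha (b+1)).le
      apply div_le_div_of_nonneg_left one_pos.le (by positivity) _
      nlinarith [Nat.cast_nonneg (α := ℝ) b]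
    · apply mul_lt_mul_of_pos_left _ (rr_pos ha 2)
      apply div_lt_div_of_pos_left one_pos (by positivity) _
      push_cast
      nlinarith
    · exact (summable_rr ha).mul_right _
  have hsum1 : (∑' k : ℕ, rr a (k + 1) * (1 / (x * (x + 1)))) = 1 / (x * (x+1)) := by
    rw [((hasSum_rr_one ha).mul_right (1 / (x * (x+1)))).tsum_eq]
    ring
  rw [hsum1] at hU
  have e : 1 / x - 1 / (x * (x+1)) = 1 / (x + 1) := by
    field_simp
    ring
  linarith [hU, e.symm.le]

/-- The positive factor in the derivative. -/
noncomputable def Wfun (a x : ℝ) : ℝ :=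
  (∑' k : ℕ, rr a (k + 1) / ((x + k) * (a + k))) - 1 / ((x + 1) * (a + 1))

lemma summable_W (ha : 0 < a) (hx : 0 < x) :
    Summable (fun k : ℕ => rr a (k + 1) / ((x + k) * (a + k))) := by
  apply Summable.of_nonneg_of_le _ _ ((summable_rr ha).mul_right (1/(x*a)))
  · intro k
    have h1 := (rr_pos ha (k+1)).le
    have h2 : (0:ℝ) < x + k := by positivity
    have h3 : (0:ℝ) < a + k := by positivity
    positivity
  · intro k
    have h2 : (0:ℝ) < x + k := by positivity
    have h3 : (0:ℝ) < a + k := by positivity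
    have h4 : x * a ≤ (x + k) * (a + k) := by
      nlinarith [Nat.cast_nonneg (α := ℝ) k]
    rw [div_eq_mul_inv, mul_comm (rr a (k+1)) _, mul_comm (rr a (k+1)) _]
    apply mul_le_mul_of_nonneg_right _ (rr_pos ha (k+1)).le
    rw [one_div]
    exact inv_anti₀ (by positivity) h4

lemma Wfun_pos (ha : 0 < a) (hx : 0 < x) : 0 < Wfun a x := by
  have key : (∑' k : ℕ, rr a (k + 1) / ((x + k) * (a + k)))
      = (∑' k : ℕ, (rr a k - rr a (k + 1)) / (x + k)) / (a + 1) := by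
    rw [eq_div_iff (by linarith : (a:ℝ) + 1 ≠ 0)]
    rw [← tsum_mul_right]
    apply tsum_congr
    intro k
    have h1 : (2 * a + 1 + (k : ℝ)) ≠ 0 := by positivity
    have h2 : (a + (k : ℝ)) ≠ 0 := by positivity
    have h3 : (x + (k : ℝ)) ≠ 0 := by positivity
    rw [rr_sub ha, rr_succ ha]
    field_simp
  rw [Wfun, key]
  have h := sum_gt ha hx
  have hS : (0:ℝ) < x + 1 := by linarith
  have ha1 : (0:ℝ) < a + 1 := by linarith
  rw [sub_pos, div_lt_div_iff₀ (by positivity) ha1]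
  have h' : 1 < (∑' k : ℕ, (rr a k - rr a (k + 1)) / (x + k)) * (x + 1) :=
    (div_lt_iff₀ hS).1 h
  nlinarith

/-- summability of the derivative series -/
lemma summable_deriv_terms (ha : 0 < a) (hx : 0 < x) :
    Summable (fun k : ℕ => rr a (k + 1) / (x + k)) := by
  apply Summable.of_nonneg_of_le _ _ ((summable_rr ha).mul_right (1/x))
  · intro k
    have h2 : (0:ℝ) < x + k := by positivity
    exact div_nonneg (rr_pos ha (k+1)).le h2.le
  · intro k
    have h2 : (0:ℝ) < x + k := by positivity
    rw [div_eq_mul_inv]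
    apply mul_le_mul_of_nonneg_left _ (rr_pos ha (k+1)).le
    rw [one_div]
    apply inv_anti₀ hx
    have : (0:ℝ) ≤ (k:ℝ) := Nat.cast_nonneg k
    linarith

/-- value of the derivative series -/
lemma hasSum_deriv (ha : 0 < a) (hx : 0 < x) :
    HasSum (fun k : ℕ => rr a (k + 1) / (x + k))
      (1 / (a + 1) + (a - x) * (∑' k : ℕ, rr a (k + 1) / ((x + k) * (a + k)))) := by
  have h1 := hasSum_crit ha
  have h2 := ((summable_W ha hx).hasSum).mul_left (a - x)
  have h := h1.add h2
  apply h.congr_fun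
  intro k
  have hxk : (x + (k : ℝ)) ≠ 0 := by positivity
  have hak : (a + (k : ℝ)) ≠ 0 := by positivity
  field_simp
  ring

lemma ellInf_eq (ha : 0 < a) :
    ellInf a = fun y => (∑' k : ℕ, rr a (k + 1) * Real.log (y + k)) - Real.log (y + 1) := by
  funext y
  simp only [ellInf, BOtail_eq ha]

/-- Main derivative lemma. -/
lemma hasDerivAt_ellInf (ha : 0 < a) (hx : 0 < x) :
    HasDerivAt (ellInf a) ((a - x) * Wfun a x) x := by
  rw [ellInf_eq ha]
  -- derivative of the series
  have hse : HasDerivAt (fun y => ∑' k : ℕ, rr a (k + 1) * Real.log (y + k))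
      (∑' k : ℕ, rr a (k + 1) / (x + k)) x := by
    have := hasDerivAt_tsum_of_isPreconnected
      (u := fun k : ℕ => rr a (k + 1) * (2 / x))
      (t := Set.Ioi (x / 2))
      (g := fun (k : ℕ) (y : ℝ) => rr a (k + 1) * Real.log (y + k))
      (g' := fun (k : ℕ) (y : ℝ) => rr a (k + 1) / (y + k))
      (y₀ := x) (y := x)
      ((summable_rr ha).mul_right _)
      isOpen_Ioi (isPreconnected_Ioi)
      ?_ ?_ (by simpa using half_lt_self hx) (summable_rlog ha hx)
      (by simpa using half_lt_self hx)
    · exact this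
    · intro k y hy
      have hy2 : x / 2 < y := hy
      have hyk : (0:ℝ) < y + k := by
        have : (0:ℝ) ≤ (k:ℝ) := Nat.cast_nonneg k
        linarith
      have h := ((hasDerivAt_id y).add_const (k:ℝ)).log hyk.ne'
      have h2 := h.const_mul (rr a (k + 1))
      simpa [div_eq_mul_inv, mul_comm, mul_assoc, mul_left_comm] using h2
    · intro k y hy
      have hy2 : x / 2 < y := hy
      have hyk : x / 2 < y + k := by
        have : (0:ℝ) ≤ (k:ℝ) := Nat.cast_nonneg k
        linarith
      have hyk0 : (0:ℝ) < y + k := lt_trans (by positivity) hyk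
      rw [Real.norm_eq_abs, abs_div, abs_of_nonneg (rr_pos ha (k+1)).le,
        abs_of_pos hyk0, div_eq_mul_inv]
      apply mul_le_mul_of_nonneg_left _ (rr_pos ha (k+1)).le
      rw [show (2:ℝ)/x = (x/2)⁻¹ by rw [inv_div]]
      exact inv_anti₀ (by positivity) hyk.le
  have hlog : HasDerivAt (fun y : ℝ => Real.log (y + 1)) (1 / (x + 1)) x := by
    have h := ((hasDerivAt_id x).add_const (1:ℝ)).log (by positivity : x + 1 ≠ 0)
    simpa using h
  have h := hse.sub hlog
  have hval : (∑' k : ℕ, rr a (k + 1) / (x + k)) - 1 / (x + 1) = (a - x) * Wfun a x := by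
    rw [(hasSum_deriv ha hx).tsum_eq, Wfun]
    have h1 : (x + 1 : ℝ) ≠ 0 := by positivity
    have h2 : (a + 1 : ℝ) ≠ 0 := by linarith
    field_simp
    ring
  rw [hval] at h
  exact h

lemma deriv_ellInf (ha : 0 < a) (hx : 0 < x) :
    deriv (ellInf a) x = (a - x) * Wfun a x :=
  (hasDerivAt_ellInf ha hx).deriv

end BOaux

theorem bo_unique_max (a₀ : ℝ) (ha₀ : 0 < a₀) :
    (∀ a : ℝ, 0 < a → DifferentiableAt ℝ (ellInf a₀) a) ∧
    (∀ a : ℝ, 0 < a → a < a₀ → 0 < deriv (ellInf a₀) a) ∧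
    (∀ a : ℝ, a₀ < a → deriv (ellInf a₀) a < 0) ∧
    (∀ a : ℝ, 0 < a → a ≠ a₀ → ellInf a₀ a < ellInf a₀ a₀) := by
  have hdiff : ∀ a : ℝ, 0 < a → DifferentiableAt ℝ (ellInf a₀) a :=
    fun a ha => (BOaux.hasDerivAt_ellInf ha₀ ha).differentiableAt
  have hpos : ∀ a : ℝ, 0 < a → a < a₀ → 0 < deriv (ellInf a₀) a := by
    intro a ha haa
    rw [BOaux.deriv_ellInf ha₀ ha]
    exact mul_pos (by linarith) (BOaux.Wfun_pos ha₀ ha)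
  have hneg : ∀ a : ℝ, a₀ < a → deriv (ellInf a₀) a < 0 := by
    intro a haa
    have ha : 0 < a := lt_trans ha₀ haa
    rw [BOaux.deriv_ellInf ha₀ ha]
    have := BOaux.Wfun_pos ha₀ ha
    nlinarith
  refine ⟨hdiff, hpos, hneg, ?_⟩
  intro a ha hne
  rcases lt_or_gt_of_ne hne with h | h
  · -- a < a₀ : strict mono on [a, a₀]
    have hmono : StrictMonoOn (ellInf a₀) (Set.Icc a a₀) := by
      apply strictMonoOn_of_deriv_pos (convex_Icc a a₀)
      · apply continuousOn_of_forall_continuousAt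
        intro y hy
        exact (hdiff y (lt_of_lt_of_le ha hy.1)).continuousAt
      · intro y hy
        rw [interior_Icc] at hy
        exact hpos y (lt_trans ha hy.1) hy.2
    exact hmono ⟨le_refl a, h.le⟩ ⟨h.le, le_refl a₀⟩ h
  · -- a₀ < a : strict anti on [a₀, a]
    have hanti : StrictAntiOn (ellInf a₀) (Set.Icc a₀ a) := by
      apply strictAntiOn_of_deriv_neg (convex_Icc a₀ a)
      · apply continuousOn_of_forall_continuousAt
        intro y hy
        exact (hdiff y (lt_of_lt_of_le ha₀ hy.1)).continuousAt
      · intro y hy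
        rw [interior_Icc] at hy
        exact hneg y hy.1
    exact hanti ⟨le_refl a₀, h.le⟩ ⟨h.le, le_refl a⟩ h
end
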